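/- Let V be a finite set and let h : 2^V → [0,1] and f : 2^V → [0,1] be set functions such that f(S) = 1 − h(V \ S) for every S ⊆ V and Δ_A h(S) ≥ 0 for every S ⊆ V and A ⊆ V \ S. Then f is AD-∞, i.e., (-1)^{|A|+1} Δ_A f(S) ≥ 0 for every nonempty A ⊆ V and every S ⊆ V. -/
import Mathlib


open MeasureTheory Finset
open scoped Classical

noncomputable section


/-- The difference of a set function `f` over a set `A`, evaluated at `S`:
`Δ_A f(S) = ∑_{B ⊆ A} (-1)^{|B|} f(S ∪ (A \ B))`. -/
def adDiff {V : Type*} [DecidableEq V] (f : Finset V → ℝ) (A S : Finset V) : ℝ :=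
  ∑ B ∈ A.powerset, (-1 : ℝ) ^ B.card * f (S ∪ (A \ B))

/-- A set function `f : 2^V → ℝ` is AD-`k` if `(-1)^{|A|+1} Δ_A f(S) ≥ 0` for every
nonempty `A` with `|A| ≤ k` and every `S`. -/
def IsADk {V : Type*} [DecidableEq V] (f : Finset V → ℝ) (k : ℕ) : Prop :=
  ∀ A S : Finset V, A.Nonempty → A.card ≤ k →
    0 ≤ (-1 : ℝ) ^ (A.card + 1) * adDiff f A S


/-- If `f(S) = 1 - h(V \ S)` where all differences of `h` are nonnegative, then `f` is
AD-∞: `(-1)^{|A|+1} Δ_A f(S) ≥ 0` for every nonempty `A ⊆ V` and every `S ⊆ V`. -/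
theorem ADinfty_of_complement_transform
    {V : Type*} [Fintype V] [DecidableEq V]
    (h f : Finset V → ℝ)
    (hh0 : ∀ S, 0 ≤ h S) (hh1 : ∀ S, h S ≤ 1)
    (hf0 : ∀ S, 0 ≤ f S) (hf1 : ∀ S, f S ≤ 1)
    (hfh : ∀ S : Finset V, f S = 1 - h (Finset.univ \ S))
    (hdiff : ∀ S A : Finset V, Disjoint A S → 0 ≤ adDiff h A S) :
    ∀ A S : Finset V, A.Nonempty → 0 ≤ (-1 : ℝ) ^ (A.card + 1) * adDiff f A S := by
  intro A S hA
  by_cases hAS : Disjoint A S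
  · set T := Finset.univ \ (S ∪ A) with hT
    have hdisjAT : Disjoint A T := by
      rw [hT]
      exact Finset.disjoint_sdiff.mono_right (Finset.sdiff_subset_sdiff (le_refl _)
        (Finset.subset_union_right))
    have h1 : ∀ B ∈ A.powerset, Finset.univ \ (S ∪ (A \ B)) = T ∪ B := by
      intro B hB
      rw [Finset.mem_powerset] at hB
      ext x
      have hBA : x ∈ B → x ∈ A := fun hx => hB hx
      have hAS' : x ∈ A → x ∉ S := fun hx => Finset.disjoint_left.mp hAS hx
      simp only [hT, Finset.mem_sdiff, Finset.mem_union, Finset.mem_univ, true_and,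
        Finset.mem_sdiff]
      tauto
    have hzero : ∑ B ∈ A.powerset, (-1 : ℝ) ^ B.card = 0 := by
      have := Finset.sum_powerset_neg_one_pow_card_of_nonempty hA
      exact_mod_cast congrArg (fun z : ℤ => (z : ℝ)) this
    have key : adDiff f A S = - ((-1 : ℝ) ^ A.card * adDiff h A T) := by
      have e1 : adDiff f A S = ∑ B ∈ A.powerset, ((-1 : ℝ) ^ B.card
          - (-1 : ℝ) ^ B.card * h (T ∪ B)) := by
        unfold adDiff
        refine Finset.sum_congr rfl fun B hB => ?_
        rw [hfh, h1 B hB]; ring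
      have e2 : adDiff h A T = ∑ B ∈ A.powerset,
          (-1 : ℝ) ^ A.card * ((-1 : ℝ) ^ B.card * h (T ∪ B)) := by
        unfold adDiff
        refine Finset.sum_nbij' (fun B => A \ B) (fun B => A \ B) ?_ ?_ ?_ ?_ ?_
        · intro B hB; exact Finset.mem_powerset.mpr (Finset.sdiff_subset)
        · intro B hB; exact Finset.mem_powerset.mpr (Finset.sdiff_subset)
        · intro B hB
          rw [Finset.mem_powerset] at hB
          exact Finset.sdiff_sdiff_eq_self hB
        · intro B hB
          rw [Finset.mem_powerset] at hB
          exact Finset.sdiff_sdiff_eq_self hB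
        · intro B hB
          rw [Finset.mem_powerset] at hB
          rw [Finset.card_sdiff_of_subset hB]
          have hle := Finset.card_le_card hB
          have hsign : (-1 : ℝ) ^ (A.card - B.card) =
              (-1 : ℝ) ^ A.card * (-1 : ℝ) ^ B.card := by
            rw [← pow_add]
            have : A.card - B.card + 2 * B.card = A.card + B.card := by omega
            rw [show A.card + B.card = (A.card - B.card) + 2 * B.card from this.symm,
              pow_add]
            simp [pow_mul]
          rw [hsign]
          have h2 : (-1 : ℝ) ^ A.card * (-1 : ℝ) ^ A.card = 1 := by
            rw [← pow_add]; exact Even.neg_one_pow ⟨A.card, by ring⟩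
          linear_combination (-((-1 : ℝ) ^ B.card * h (T ∪ A \ B))) * h2
      have hsq : (-1 : ℝ) ^ A.card * (-1 : ℝ) ^ A.card = 1 := by
        rw [← pow_add]
        exact Even.neg_one_pow ⟨A.card, by ring⟩
      rw [e1, Finset.sum_sub_distrib, hzero, e2, ← Finset.mul_sum]
      rw [← mul_assoc, hsq]
      ring
    have hpos := hdiff T A hdisjAT
    have hsq : (-1 : ℝ) ^ A.card * (-1 : ℝ) ^ A.card = 1 := by
      rw [← pow_add]
      exact Even.neg_one_pow ⟨A.card, by ring⟩
    have heq : (-1 : ℝ) ^ (A.card + 1) * adDiff f A S = adDiff h A T := by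
      rw [key, pow_succ]
      linear_combination adDiff h A T * hsq
    rw [heq]; exact hpos
  · -- A meets S, so the alternating sum vanishes
    rw [Finset.not_disjoint_iff] at hAS
    obtain ⟨a, haA, haS⟩ := hAS
    have hzero : adDiff f A S = 0 := by
      unfold adDiff
      have hA' : A = insert a (A.erase a) := (Finset.insert_erase haA).symm
      have hna : a ∉ A.erase a := Finset.notMem_erase a A
      rw [hA', Finset.sum_powerset_insert hna]
      have : ∀ B ∈ (A.erase a).powerset,
          (-1 : ℝ) ^ B.card * f (S ∪ (insert a (A.erase a) \ B)) +
          (-1 : ℝ) ^ (insert a B).card * f (S ∪ (insert a (A.erase a) \ insert a B)) = 0 := by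
        intro B hB
        rw [Finset.mem_powerset] at hB
        have haB : a ∉ B := fun hx => hna (hB hx)
        have hset : S ∪ (insert a (A.erase a) \ B) =
            S ∪ (insert a (A.erase a) \ insert a B) := by
          ext x
          by_cases hxa : x = a
          · subst hxa
            simp [haS]
          · simp only [Finset.mem_union, Finset.mem_sdiff, Finset.mem_insert, hxa,
              false_or]
            try tauto
        rw [hset, Finset.card_insert_of_notMem haB, pow_succ]
        try ring
      rw [← Finset.sum_add_distrib]
      exact Finset.sum_eq_zero this
    rw [hzero, mul_zero]

end
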